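/- arXiv:2002.04134 — 3 statements merged into one kernel-verified Lean document; each statement's English description precedes it below -/
import Mathlib

section
/- Let K be an algebraically closed field of characteristic different from 2 and 5, let e ∈ K satisfy e² + e = 1, and set ē = −1 − e. For every a ∈ K there exist ρ₁, ρ₂, ρ₃, ρ₄ ∈ K such that x⁴ + a·x³ + (11a+2)·x² − a·x + 1 = (x−ρ₁)(x−ρ₂)(x−ρ₃)(x−ρ₄) in K[x], and moreover ρ₁·ρ₃ = −1, ρ₂·ρ₄ = −1, ρ₁+ρ₄ = e⁵·(1−ρ₁ρ₄), ρ₂+ρ₃ = e⁵·(1−ρ₂ρ₃), ρ₁+ρ₂ = ē⁵·(1−ρ₁ρ₂), and ρ₃+ρ₄ = ē⁵·(1−ρ₃ρ₄). -/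
/-!
With `b = e⁵` one has `b² + 11b = 1` and `b ē⁵ = -1`. Hence the quartic is
`(x² + b(s-1)x + s)(x² + b(t-1)x + t)` as soon as `st = 1` and `s + t = 2 - ē⁵a`,
and the involution `ρ ↦ -1/ρ` exchanges the roots of the two factors. That involution turns
a pair with `ρ + σ = b(1 - ρσ)` into a pair with `ρ + σ' = ē⁵(1 - ρσ')`, so all six relations
come from a single pair of roots of the first factor.
-/

open Polynomial

theorem IsAlgClosed.exists_add_eq_and_mul_eq {K : Type*} [Field K] [IsAlgClosed K] (p q : K) :
    ∃ u v : K, u + v = p ∧ u * v = q := by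
  have hdeg : (X ^ 2 - C p * X + C q : K[X]).degree = 2 := by compute_degree!
  obtain ⟨u, hu⟩ := IsAlgClosed.exists_root _ (hdeg ▸ two_ne_zero)
  refine ⟨u, p - u, by ring, ?_⟩
  simp only [IsRoot, eval_add, eval_sub, eval_pow, eval_mul, eval_X, eval_C] at hu
  linear_combination -hu

section CommRing

variable {R : Type*} [CommRing R]

theorem X_sq_add_C_mul_X_add_C_eq_mul {r s u v : R} (hsum : u + v = -r) (hprod : u * v = s) :
    (X ^ 2 + C r * X + C s : R[X]) = (X - C u) * (X - C v) := by
  obtain rfl : r = -(u + v) := by linear_combination hsum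
  subst hprod
  simp only [map_neg, map_add, map_mul]
  ring

theorem quartic_eq_mul_quadratics {a b s t : R} (hb : b ^ 2 + 11 * b = 1) (hst : s * t = 1)
    (ha : b * (s + t - 2) = a) :
    (X ^ 4 + C a * X ^ 3 + C (11 * a + 2) * X ^ 2 - C a * X + 1 : R[X]) =
      (X ^ 2 + C (b * (s - 1)) * X + C s) * (X ^ 2 + C (b * (t - 1)) * X + C t) := by
  subst ha
  have hb' : C b ^ 2 + 11 * C b = (1 : R[X]) := by
    simpa only [map_add, map_mul, map_pow, map_ofNat, map_one] using congrArg C hb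
  have hst' : C s * C t = (1 : R[X]) := by
    simpa only [map_mul, map_one] using congrArg C hst
  simp only [map_add, map_sub, map_mul, map_ofNat, map_one]
  linear_combination
    -X ^ 2 * (2 - C s - C t) * hb' - (X ^ 2 * C b ^ 2 + 2 * X * C b + 1) * hst'

theorem add_eq_mul_one_sub_mul_of_mul_eq_neg_one {b c x y z : R} (h : x + y = b * (1 - x * y))
    (hyz : y * z = -1) (hbc : b * c = -1) : x + z = c * (1 - x * z) := by
  linear_combination (x + z - c * (1 - x * z) - z * (1 + c * x)) * hyz - z * (x * y - 1) * hbc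
    + z * c * h

theorem pow_five_sq_add_eleven_mul_pow_five {e : R} (he : e ^ 2 + e = 1) :
    (e ^ 5) ^ 2 + 11 * e ^ 5 = 1 := by
  have h5 : e ^ 5 = 5 * e - 3 := by linear_combination (e ^ 3 - e ^ 2 + 2 * e - 3) * he
  rw [h5]
  linear_combination 25 * he

theorem pow_five_mul_neg_one_sub_pow_five {e : R} (he : e ^ 2 + e = 1) :
    e ^ 5 * (-1 - e) ^ 5 = -1 := by
  have h : e * (-1 - e) = -1 := by linear_combination -he
  rw [← mul_pow, h]
  norm_num

end CommRing

theorem quartic_roots_pairing_general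
    (K : Type) [Field K] [IsAlgClosed K]
    (e : K) (he : e ^ 2 + e = 1) (a : K) :
    ∃ ρ₁ ρ₂ ρ₃ ρ₄ : K,
      (X ^ 4 + C a * X ^ 3 + C (11 * a + 2) * X ^ 2 - C a * X + 1 : Polynomial K) =
        (X - C ρ₁) * (X - C ρ₂) * (X - C ρ₃) * (X - C ρ₄) ∧
      ρ₁ * ρ₃ = -1 ∧
      ρ₂ * ρ₄ = -1 ∧
      ρ₁ + ρ₄ = e ^ 5 * (1 - ρ₁ * ρ₄) ∧
      ρ₂ + ρ₃ = e ^ 5 * (1 - ρ₂ * ρ₃) ∧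
      ρ₁ + ρ₂ = (-1 - e) ^ 5 * (1 - ρ₁ * ρ₂) ∧
      ρ₃ + ρ₄ = (-1 - e) ^ 5 * (1 - ρ₃ * ρ₄) := by
  have hbc := pow_five_mul_neg_one_sub_pow_five he
  have hcb : (-1 - e) ^ 5 * e ^ 5 = -1 := by rw [mul_comm, hbc]
  obtain ⟨s, t, hst_sum, hst⟩ :=
    IsAlgClosed.exists_add_eq_and_mul_eq (2 - (-1 - e) ^ 5 * a) 1
  obtain ⟨ρ₁, ρ₄, h14_sum, h14⟩ := IsAlgClosed.exists_add_eq_and_mul_eq (e ^ 5 * (1 - s)) s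
  -- `t ρ₁ = 1/ρ₄` and `t ρ₄ = 1/ρ₁`, since `t ρ₁ ρ₄ = t s = 1`
  refine ⟨ρ₁, -t * ρ₁, -t * ρ₄, ρ₄, ?_⟩
  have h13 : ρ₁ * (-t * ρ₄) = -1 := by linear_combination -t * h14 - hst
  have h24 : -t * ρ₁ * ρ₄ = -1 := by linear_combination -t * h14 - hst
  have h14' : ρ₁ + ρ₄ = e ^ 5 * (1 - ρ₁ * ρ₄) := by
    linear_combination h14_sum + e ^ 5 * h14
  have h12 := add_eq_mul_one_sub_mul_of_mul_eq_neg_one (z := -t * ρ₁) h14'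
    (by linear_combination h24) hbc
  have h43 := add_eq_mul_one_sub_mul_of_mul_eq_neg_one (x := ρ₄) (y := ρ₁)
    (by linear_combination h14') h13 hbc
  have h23 := add_eq_mul_one_sub_mul_of_mul_eq_neg_one (x := -t * ρ₁) (y := ρ₁)
    (by linear_combination h12) h13 hcb
  refine ⟨?_, h13, h24, h14', h23, h12, by linear_combination h43⟩
  rw [quartic_eq_mul_quadratics (pow_five_sq_add_eleven_mul_pow_five he) hst
      (by linear_combination e ^ 5 * hst_sum - a * hbc),
    X_sq_add_C_mul_X_add_C_eq_mul (u := ρ₁) (v := ρ₄) (by linear_combination h14_sum) h14,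
    X_sq_add_C_mul_X_add_C_eq_mul (u := -t * ρ₁) (v := -t * ρ₄)
      (by linear_combination -t * h14_sum + e ^ 5 * hst)
      (by linear_combination t ^ 2 * h14 + t * hst)]
  ring

/-- Lemma 3.1 of Morton's paper and its consequences: over an algebraically closed field of
characteristic `≠ 2, 5`, the quartic `x⁴ + ax³ + (11a+2)x² − ax + 1` factors into linear
factors whose roots pair up under `ρ ↦ −1/ρ` and combine into two quadratics `x² + rx + s`
with `r = e⁵(s−1)` and two with `r = ē⁵(s−1)`, where `e, ē = −1−e` are the roots of
`e² + e = 1`. -/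
theorem quartic_roots_pairing
    (K : Type) [Field K] [IsAlgClosed K]
    (h2 : (2 : K) ≠ 0) (h5 : (5 : K) ≠ 0)
    (e : K) (he : e ^ 2 + e = 1) (a : K) :
    ∃ ρ₁ ρ₂ ρ₃ ρ₄ : K,
      (X ^ 4 + C a * X ^ 3 + C (11 * a + 2) * X ^ 2 - C a * X + 1 : Polynomial K) =
        (X - C ρ₁) * (X - C ρ₂) * (X - C ρ₃) * (X - C ρ₄) ∧
      ρ₁ * ρ₃ = -1 ∧
      ρ₂ * ρ₄ = -1 ∧
      ρ₁ + ρ₄ = e ^ 5 * (1 - ρ₁ * ρ₄) ∧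
      ρ₂ + ρ₃ = e ^ 5 * (1 - ρ₂ * ρ₃) ∧
      ρ₁ + ρ₂ = (-1 - e) ^ 5 * (1 - ρ₁ * ρ₂) ∧
      ρ₃ + ρ₄ = (-1 - e) ^ 5 * (1 - ρ₃ * ρ₄) :=
  quartic_roots_pairing_general K e he a
end

section
/- Let ζ = exp(2πi/5) ∈ ℂ and let S and T be the images in PGL₂(ℂ) (the quotient of GL₂(ℂ) by its center) of the invertible matrices [[ζ, 0], [0, 1]] and [[−(1+√5), 2], [2, 1+√5]]. Then the subgroup of PGL₂(ℂ) generated by S and T is isomorphic as a group to the alternating group A₅ on five letters; in particular it has order 60. -/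
/-!
`S` and `T` satisfy the relations of the `(2,3,5)` von Dyck group `⟨a, b ∣ a⁵ = b² = (ab)³ = 1⟩`:
`S` is diagonal of order five, the trace of `T` vanishes, so `T²` is scalar by
Cayley–Hamilton, and `tr(ST)² = det(ST)` because `ζ + ζ⁻¹ = 2 cos(2π/5) = (√5 - 1)/2`, so `(ST)³`
is scalar.

The von Dyck group has at most 60 elements: `⟨a⟩` has at most five elements and at most twelve
left cosets, since the twelve cosets corresponding to the vertices of an icosahedron are permuted
by `a` and `b`. It maps onto `A₅` through `a ↦ (0 1 2 3 4)`, `b ↦ (1 2)(3 4)`: the image contains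
elements of orders 5, 2 and 3, and a subgroup of `A₅` of order divisible by 30 has index at most
two, hence is all of `A₅` by simplicity. So the von Dyck group is `A₅`, and as it is simple its
image `⟨S, T⟩ ≠ 1` is a copy of it.
-/

open Matrix Complex

/-- `PGL₂(ℂ)`: the quotient of `GL₂(ℂ)` by its center. -/
abbrev PGL2C : Type := GL (Fin 2) ℂ ⧸ Subgroup.center (GL (Fin 2) ℂ)

theorem smul_mem_of_closure_eq_top {G α : Type*} [Group G] [MulAction G α] {s : Set G}
    (hs : Subgroup.closure s = ⊤) {C : Set α}
    (hC : ∀ x ∈ s, ∀ c ∈ C, x • c ∈ C ∧ x⁻¹ • c ∈ C) (g : G) {c : α} (hc : c ∈ C) :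
    g • c ∈ C := by
  induction (hs ▸ Subgroup.mem_top g : g ∈ Subgroup.closure s)
    using Subgroup.closure_induction_left with
  | one => rwa [one_smul]
  | mul_left x hx y _ ih => rw [mul_smul]; exact (hC x hx _ ih).1
  | inv_mul_cancel x hx y _ ih => rw [mul_smul]; exact (hC x hx _ ih).2

section RangeZPow

variable {G α : Type*} [Group G] {x : G} {n : ℕ}

lemma range_zpow_comp_eq_image (f : G → α) :
    (Set.range fun j : ℤ => f (x ^ j)) = f '' (Subgroup.zpowers x : Set G) := by
  rw [Subgroup.coe_zpowers, ← Set.range_comp]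
  rfl

lemma finite_zpowers_of_pow_eq_one (hn : 0 < n) (hx : x ^ n = 1) :
    (Subgroup.zpowers x : Set G).Finite :=
  finite_zpowers.2 (isOfFinOrder_iff_pow_eq_one.2 ⟨n, hn, hx⟩)

lemma finite_range_zpow_comp (hn : 0 < n) (hx : x ^ n = 1) (f : G → α) :
    (Set.range fun j : ℤ => f (x ^ j)).Finite := by
  rw [range_zpow_comp_eq_image]
  exact (finite_zpowers_of_pow_eq_one hn hx).image f

lemma ncard_range_zpow_comp_le (hn : 0 < n) (hx : x ^ n = 1) (f : G → α) :
    (Set.range fun j : ℤ => f (x ^ j)).ncard ≤ n := by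
  rw [range_zpow_comp_eq_image]
  refine (Set.ncard_image_le (finite_zpowers_of_pow_eq_one hn hx)).trans ?_
  rw [← Nat.card_coe_set_eq, SetLike.coe_sort_coe, Nat.card_zpowers]
  exact orderOf_le_of_pow_eq_one hn hx

end RangeZPow

theorem Subgroup.index_ne_two_of_isSimpleGroup {G : Type*} [Group G] [IsSimpleGroup G]
    (hG : Nat.card G ≠ 2) (H : Subgroup G) : H.index ≠ 2 := by
  intro h
  rcases (Subgroup.normal_of_index_eq_two h).eq_bot_or_eq_top with rfl | rfl
  · rw [Subgroup.index_bot] at h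
    exact hG h
  · simp at h

namespace Matrix

variable {R : Type*} [CommRing R]

theorem sq_eq_trace_smul_sub_det_smul_one (M : Matrix (Fin 2) (Fin 2) R) :
    M ^ 2 = M.trace • M - M.det • 1 := by
  ext i j
  fin_cases i <;> fin_cases j <;>
    simp [sq, mul_apply, trace_fin_two, det_fin_two] <;> ring

theorem sq_eq_smul_one_of_trace_eq_zero {M : Matrix (Fin 2) (Fin 2) R} (h : M.trace = 0) :
    M ^ 2 = (-M.det) • 1 := by
  rw [sq_eq_trace_smul_sub_det_smul_one, h, zero_smul, zero_sub, neg_smul]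

theorem pow_three_eq_smul_one_of_trace_sq_eq_det {M : Matrix (Fin 2) (Fin 2) R}
    (h : M.trace ^ 2 = M.det) : M ^ 3 = (-(M.trace * M.det)) • 1 := by
  rw [pow_succ, sq_eq_trace_smul_sub_det_smul_one, sub_mul, smul_mul, smul_mul, one_mul, ← sq,
    sq_eq_trace_smul_sub_det_smul_one, ← h]
  module

namespace GeneralLinearGroup

variable {n : Type*} [Fintype n] [DecidableEq n]

theorem mk_pow_eq_one_of_val_pow_eq_smul_one {g : GL n R} {k : ℕ} {c : R}
    (h : (g : Matrix n n R) ^ k = c • 1) :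
    (g : GL n R ⧸ Subgroup.center (GL n R)) ^ k = 1 := by
  rw [← QuotientGroup.mk_pow, QuotientGroup.eq_one_iff, mem_center_iff_val_mem_range_scalar,
    Units.val_pow_eq_pow_val, h]
  exact ⟨c, by rw [scalar_apply, smul_one_eq_diagonal]⟩

theorem mk_ne_one_of_val_eq_of_ne_one {g : GL (Fin 2) R} {x : R} (hx : x ≠ 1)
    (h : (g : Matrix (Fin 2) (Fin 2) R) = !![x, 0; 0, 1]) :
    (g : GL (Fin 2) R ⧸ Subgroup.center (GL (Fin 2) R)) ≠ 1 := by
  rw [Ne, QuotientGroup.eq_one_iff, mem_center_iff_val_mem_range_scalar, h]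
  rintro ⟨c, hc⟩
  have h00 := congrFun₂ hc 0 0
  have h11 := congrFun₂ hc 1 1
  simp only [scalar_apply, diagonal_apply_eq, of_apply, cons_val', cons_val_zero, cons_val_one,
    empty_val', cons_val_fin_one] at h00 h11
  exact hx (h00.symm.trans h11)

end GeneralLinearGroup

end Matrix

theorem Complex.exp_two_pi_I_div_five_sq_add_one :
    exp (2 * Real.pi * I / 5) ^ 2 + 1 = (Real.sqrt 5 - 1) / 2 * exp (2 * Real.pi * I / 5) := by
  have hcos : Real.cos (2 * Real.pi / 5) = (Real.sqrt 5 - 1) / 4 := by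
    rw [show 2 * Real.pi / 5 = 2 * (Real.pi / 5) by ring, Real.cos_two_mul, Real.cos_pi_div_five]
    nlinarith [Real.sq_sqrt (show (0 : ℝ) ≤ 5 by norm_num)]
  have hsum : exp (2 * Real.pi * I / 5) + (exp (2 * Real.pi * I / 5))⁻¹ =
      2 * Real.cos (2 * Real.pi / 5) := by
    rw [← exp_neg, ofReal_cos, two_cos]
    push_cast
    ring_nf
  have hne := exp_ne_zero (2 * Real.pi * I / 5)
  rw [hcos] at hsum
  field_simp at hsum
  push_cast at hsum
  linear_combination hsum

theorem nat_card_alternatingGroup_fin_five : Nat.card (alternatingGroup (Fin 5)) = 60 := by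
  rw [nat_card_alternatingGroup, Nat.card_eq_fintype_card, Fintype.card_fin]
  rfl

instance : IsSimpleGroup (alternatingGroup (Fin 5)) :=
  alternatingGroup.isSimpleGroup (by simp)

namespace alternatingGroup

def fiveCycle : alternatingGroup (Fin 5) :=
  ⟨finRotate 5, Equiv.Perm.mem_alternatingGroup.2 (by decide)⟩

def doubleTransposition : alternatingGroup (Fin 5) :=
  ⟨Equiv.swap 1 2 * Equiv.swap 3 4, Equiv.Perm.mem_alternatingGroup.2 (by decide)⟩

lemma fiveCycle_pow_five : fiveCycle ^ 5 = 1 := by decide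

lemma doubleTransposition_sq : doubleTransposition ^ 2 = 1 := by decide

lemma fiveCycle_mul_doubleTransposition_pow_three :
    (fiveCycle * doubleTransposition) ^ 3 = 1 := by decide

theorem closure_fiveCycle_doubleTransposition :
    Subgroup.closure {fiveCycle, doubleTransposition} = ⊤ := by
  set C := Subgroup.closure {fiveCycle, doubleTransposition}
  have : Fact (Nat.Prime 5) := ⟨by norm_num⟩
  have hσ : fiveCycle ∈ C := Subgroup.subset_closure (by simp)
  have hτ : doubleTransposition ∈ C := Subgroup.subset_closure (by simp)
  have h5 := C.orderOf_dvd_natCard hσ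
  have h2 := C.orderOf_dvd_natCard hτ
  have h3 := C.orderOf_dvd_natCard (mul_mem hσ hτ)
  rw [orderOf_eq_prime fiveCycle_pow_five (by decide)] at h5
  rw [orderOf_eq_prime doubleTransposition_sq (by decide)] at h2
  rw [orderOf_eq_prime fiveCycle_mul_doubleTransposition_pow_three (by decide)] at h3
  have hmul := C.card_mul_index
  rw [nat_card_alternatingGroup_fin_five] at hmul
  have h30 : 30 ≤ Nat.card C := by
    have := Nat.card_pos (α := C)
    omega
  have hidx_le : C.index ≤ 2 := by nlinarith
  have hidx_ne_zero : C.index ≠ 0 := by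
    rintro h
    simp [h] at hmul
  have hidx_ne_two := C.index_ne_two_of_isSimpleGroup (by
    rw [nat_card_alternatingGroup_fin_five]
    norm_num)
  exact Subgroup.index_eq_one.1 (by omega)

end alternatingGroup

def VonDyck235.rels : Set (FreeGroup Bool) :=
  {.of false ^ 5, .of true ^ 2, (.of false * .of true) ^ 3}

abbrev VonDyck235 : Type := PresentedGroup VonDyck235.rels

namespace VonDyck235

open Subgroup

def a : VonDyck235 := PresentedGroup.of false

def b : VonDyck235 := PresentedGroup.of true

lemma a_pow_five : a ^ 5 = 1 :=
  PresentedGroup.one_of_mem (by simp [rels])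

lemma b_sq : b ^ 2 = 1 :=
  PresentedGroup.one_of_mem (by simp [rels])

lemma a_mul_b_pow_three : (a * b) ^ 3 = 1 :=
  PresentedGroup.one_of_mem (by simp [rels])

lemma b_mul_b : b * b = 1 := by
  rw [← sq, b_sq]

lemma b_mul_b_mul (x : VonDyck235) : b * (b * x) = x := by
  rw [← mul_assoc, b_mul_b, one_mul]

lemma b_inv : b⁻¹ = b :=
  inv_eq_of_mul_eq_one_right b_mul_b

lemma a_zpow_congr {i j : ℤ} (h : i ≡ j [ZMOD 5]) : a ^ i = a ^ j := by
  rw [zpow_eq_zpow_emod' i a_pow_five, zpow_eq_zpow_emod' j a_pow_five]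
  exact congrArg _ h

lemma exists_a_zpow_eq (j : ℤ) : ∃ r : ℤ, -2 ≤ r ∧ r ≤ 2 ∧ a ^ j = a ^ r :=
  ⟨(j + 2) % 5 - 2, by omega, by omega, a_zpow_congr (by unfold Int.ModEq; omega)⟩

lemma b_mul_a_mul_b : b * a * b = a⁻¹ * b * a⁻¹ :=
  calc b * a * b = a⁻¹ * ((a * b) * (a * b) * (a * b)) * b⁻¹ * a⁻¹ := by group
    _ = a⁻¹ * b * a⁻¹ := by rw [← pow_three', a_mul_b_pow_three, b_inv]; group

lemma b_mul_a_inv_mul_b : b * a⁻¹ * b = a * b * a :=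
  calc b * a⁻¹ * b = b ^ 2 * (b * a * b)⁻¹ * b ^ 2 := by group
    _ = a * b * a := by
        rw [b_sq, b_mul_a_mul_b, _root_.mul_inv_rev, _root_.mul_inv_rev, b_inv, inv_inv]
        group

lemma b_mul_a_sq_mul_b : b * a ^ 2 * b = a⁻¹ * b * a ^ (-2 : ℤ) * b * a⁻¹ :=
  calc b * a ^ 2 * b = (b * a * b) * (b ^ 2)⁻¹ * (b * a * b) := by rw [sq a]; group
    _ = a⁻¹ * b * a ^ (-2 : ℤ) * b * a⁻¹ := by rw [b_mul_a_mul_b, b_sq]; group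

lemma b_mul_a_zpow_neg_two_mul_b : b * a ^ (-2 : ℤ) * b = a * b * a ^ 2 * b * a :=
  calc b * a ^ (-2 : ℤ) * b = (b * a⁻¹ * b) * (b ^ 2)⁻¹ * (b * a⁻¹ * b) := by group
    _ = a * b * a ^ 2 * b * a := by rw [b_mul_a_inv_mul_b, b_sq, sq a]; group

def antipode : VonDyck235 := b * a ^ (-2 : ℤ) * b * a ^ 2 * b

lemma a_mul_antipode_mul_a : a * antipode * a = antipode :=
  calc a * antipode * a = a * b * a ^ (-2 : ℤ) * (b * a ^ 2 * b) * a := by rw [antipode]; group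
    _ = a * b * a ^ (-3 : ℤ) * b * a ^ (-2 : ℤ) * b := by rw [b_mul_a_sq_mul_b]; group
    _ = a * (b * a ^ 2 * b) * a ^ (-2 : ℤ) * b := by
        rw [a_zpow_congr (show (-3 : ℤ) ≡ 2 [ZMOD 5] by decide)]; group
    _ = b * a ^ (-2 : ℤ) * b * a ^ (-3 : ℤ) * b := by rw [b_mul_a_sq_mul_b]; group
    _ = antipode := by
        rw [a_zpow_congr (show (-3 : ℤ) ≡ 2 [ZMOD 5] by decide), antipode]; group

def upperRing (j : ℤ) : VonDyck235 ⧸ zpowers a := ↑(a ^ j * b)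

def lowerRing (j : ℤ) : VonDyck235 ⧸ zpowers a := ↑(a ^ j * b * a ^ 2 * b)

/-- The twelve left cosets of `⟨a⟩`, placed as the vertices of an icosahedron whose vertex `⟨a⟩`
is fixed by the rotation `a`. -/
def vertices : Set (VonDyck235 ⧸ zpowers a) :=
  {↑(1 : VonDyck235), ↑antipode} ∪ Set.range upperRing ∪ Set.range lowerRing

lemma mem_vertices {v : VonDyck235 ⧸ zpowers a} :
    v ∈ vertices ↔ v = ↑(1 : VonDyck235) ∨ v = ↑antipode ∨ (∃ j, upperRing j = v) ∨
      ∃ j, lowerRing j = v := by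
  simp only [vertices, Set.mem_union, Set.mem_insert_iff, Set.mem_singleton_iff, Set.mem_range,
    or_assoc]

lemma one_mem_vertices : ((1 : VonDyck235) : VonDyck235 ⧸ zpowers a) ∈ vertices :=
  mem_vertices.2 (.inl rfl)

lemma antipode_mem_vertices : (antipode : VonDyck235 ⧸ zpowers a) ∈ vertices :=
  mem_vertices.2 (.inr (.inl rfl))

lemma upperRing_mem_vertices (j : ℤ) : upperRing j ∈ vertices :=
  mem_vertices.2 (.inr (.inr (.inl ⟨j, rfl⟩)))

lemma lowerRing_mem_vertices (j : ℤ) : lowerRing j ∈ vertices :=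
  mem_vertices.2 (.inr (.inr (.inr ⟨j, rfl⟩)))

lemma mem_vertices_of_eq_mul_zpow {x y : VonDyck235}
    (hy : (y : VonDyck235 ⧸ zpowers a) ∈ vertices) (k : ℤ) (h : x = y * a ^ k) :
    (x : VonDyck235 ⧸ zpowers a) ∈ vertices := by
  rwa [h, QuotientGroup.mk_mul_of_mem y (zpow_mem_zpowers a k)]

lemma a_smul_antipode : a • (antipode : VonDyck235 ⧸ zpowers a) = antipode := by
  show ((a * antipode : VonDyck235) : VonDyck235 ⧸ zpowers a) = antipode
  rw [eq_mul_inv_of_mul_eq a_mul_antipode_mul_a, ← _root_.zpow_neg_one,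
    QuotientGroup.mk_mul_of_mem _ (zpow_mem_zpowers a _)]

lemma a_zpow_smul_mem_vertices (k : ℤ) {v} (hv : v ∈ vertices) : a ^ k • v ∈ vertices := by
  rw [mem_vertices] at hv
  rcases hv with rfl | rfl | ⟨j, rfl⟩ | ⟨j, rfl⟩
  · exact mem_vertices_of_eq_mul_zpow (x := a ^ k * 1) one_mem_vertices k (by group)
  · rw [MulAction.mem_stabilizer_iff.1
      (zpow_mem (MulAction.mem_stabilizer_iff.2 a_smul_antipode) k)]
    exact antipode_mem_vertices
  · convert upperRing_mem_vertices (k + j) using 1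
    simp [upperRing, _root_.zpow_add, mul_assoc]
  · convert lowerRing_mem_vertices (k + j) using 1
    simp [lowerRing, _root_.zpow_add, mul_assoc]

lemma b_smul_upperRing_mem_vertices (j : ℤ) : b • upperRing j ∈ vertices := by
  obtain ⟨r, hr₁, hr₂, hr⟩ := exists_a_zpow_eq j
  show ((b * (a ^ j * b) : VonDyck235) : VonDyck235 ⧸ zpowers a) ∈ vertices
  rw [hr]
  interval_cases r
  · exact mem_vertices_of_eq_mul_zpow (lowerRing_mem_vertices 1) 1
      (by rw [← mul_assoc, b_mul_a_zpow_neg_two_mul_b]; group)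
  · exact mem_vertices_of_eq_mul_zpow (upperRing_mem_vertices 1) 1
      (by rw [_root_.zpow_neg_one, ← mul_assoc, b_mul_a_inv_mul_b]; group)
  · exact mem_vertices_of_eq_mul_zpow one_mem_vertices 0
      (by rw [zpow_zero, one_mul, b_mul_b]; group)
  · exact mem_vertices_of_eq_mul_zpow (upperRing_mem_vertices (-1)) (-1)
      (by rw [zpow_one, ← mul_assoc, b_mul_a_mul_b]; group)
  · exact mem_vertices_of_eq_mul_zpow (lowerRing_mem_vertices 0) 0 (by group)

lemma b_smul_lowerRing_mem_vertices (j : ℤ) : b • lowerRing j ∈ vertices := by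
  obtain ⟨r, hr₁, hr₂, hr⟩ := exists_a_zpow_eq j
  show ((b * (a ^ j * b * a ^ 2 * b) : VonDyck235) : VonDyck235 ⧸ zpowers a) ∈ vertices
  rw [hr]
  interval_cases r
  · exact mem_vertices_of_eq_mul_zpow antipode_mem_vertices 0 (by rw [antipode]; group)
  · refine mem_vertices_of_eq_mul_zpow (lowerRing_mem_vertices 2) 1 ?_
    calc b * (a ^ (-1 : ℤ) * b * a ^ 2 * b) = (b * a⁻¹ * b) * a ^ 2 * b := by group
      _ = a * (b * a ^ (-2 : ℤ) * b) := by
          rw [b_mul_a_inv_mul_b, a_zpow_congr (show (-2 : ℤ) ≡ 3 [ZMOD 5] by decide)]; group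
      _ = a ^ (2 : ℤ) * b * a ^ 2 * b * a ^ (1 : ℤ) := by
          rw [b_mul_a_zpow_neg_two_mul_b, _root_.zpow_two]; group
  · exact mem_vertices_of_eq_mul_zpow (upperRing_mem_vertices 2) 0
      (by simp only [zpow_zero, one_mul, mul_one, mul_assoc, b_mul_b_mul]; group)
  · refine mem_vertices_of_eq_mul_zpow (upperRing_mem_vertices (-2)) (-1) ?_
    calc b * (a ^ (1 : ℤ) * b * a ^ 2 * b) = (b * a * b) * a ^ 2 * b := by group
      _ = a⁻¹ * b * a * b := by rw [b_mul_a_mul_b]; group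
      _ = a⁻¹ * (b * a * b) := by group
      _ = a ^ (-2 : ℤ) * b * a ^ (-1 : ℤ) := by rw [b_mul_a_mul_b]; group
  · refine mem_vertices_of_eq_mul_zpow (lowerRing_mem_vertices (-1)) (-1) ?_
    calc b * (a ^ (2 : ℤ) * b * a ^ 2 * b) = (b * a ^ 2 * b) * a ^ 2 * b := by group
      _ = a⁻¹ * b * a ^ (-2 : ℤ) * (b * a * b) := by rw [b_mul_a_sq_mul_b]; group
      _ = a⁻¹ * b * a ^ (-3 : ℤ) * b * a⁻¹ := by rw [b_mul_a_mul_b]; group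
      _ = a ^ (-1 : ℤ) * b * a ^ 2 * b * a ^ (-1 : ℤ) := by
          rw [a_zpow_congr (show (-3 : ℤ) ≡ 2 [ZMOD 5] by decide)]; group

lemma b_smul_mem_vertices {v} (hv : v ∈ vertices) : b • v ∈ vertices := by
  rw [mem_vertices] at hv
  rcases hv with rfl | rfl | ⟨j, rfl⟩ | ⟨j, rfl⟩
  · exact mem_vertices_of_eq_mul_zpow (x := b * 1) (upperRing_mem_vertices 0) 0 (by group)
  · exact mem_vertices_of_eq_mul_zpow (x := b * antipode) (lowerRing_mem_vertices (-2)) 0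
      (by simp only [antipode, mul_assoc, b_mul_b_mul]; group)
  · exact b_smul_upperRing_mem_vertices j
  · exact b_smul_lowerRing_mem_vertices j

lemma vertices_eq_univ : vertices = Set.univ := by
  refine Set.eq_univ_of_forall fun v => QuotientGroup.induction_on v fun g => ?_
  have hgen : ∀ x ∈ Set.range (PresentedGroup.of (rels := rels)), ∀ v ∈ vertices,
      x • v ∈ vertices ∧ x⁻¹ • v ∈ vertices := by
    rintro _ ⟨_ | _, rfl⟩ v hv
    · have ha := a_zpow_smul_mem_vertices 1 hv
      have ha_inv := a_zpow_smul_mem_vertices (-1) hv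
      rw [zpow_one] at ha
      rw [_root_.zpow_neg_one] at ha_inv
      exact ⟨ha, ha_inv⟩
    · exact ⟨b_smul_mem_vertices hv, b_inv ▸ b_smul_mem_vertices hv⟩
  simpa using smul_mem_of_closure_eq_top (PresentedGroup.closure_range_of rels) hgen g
    one_mem_vertices

lemma finite_vertices : vertices.Finite :=
  ((Set.toFinite {↑(1 : VonDyck235), ↑antipode}).union
    (finite_range_zpow_comp (by norm_num) a_pow_five
      fun h => ((h * b : VonDyck235) : VonDyck235 ⧸ zpowers a))).union
    (finite_range_zpow_comp (by norm_num) a_pow_five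
      fun h => ((h * b * a ^ 2 * b : VonDyck235) : VonDyck235 ⧸ zpowers a))

lemma ncard_vertices_le : vertices.ncard ≤ 12 := by
  have hpair := Set.ncard_insert_le ((1 : VonDyck235) : VonDyck235 ⧸ zpowers a)
    {(antipode : VonDyck235 ⧸ zpowers a)}
  have hupper := ncard_range_zpow_comp_le (by norm_num) a_pow_five
    fun h => ((h * b : VonDyck235) : VonDyck235 ⧸ zpowers a)
  have hlower := ncard_range_zpow_comp_le (by norm_num) a_pow_five
    fun h => ((h * b * a ^ 2 * b : VonDyck235) : VonDyck235 ⧸ zpowers a)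
  rw [Set.ncard_singleton] at hpair
  refine (Set.ncard_union_le _ _).trans
    ((Nat.add_le_add_right (Set.ncard_union_le _ _) _).trans ?_)
  exact le_trans (Nat.add_le_add (Nat.add_le_add hpair hupper) hlower) (by norm_num)

lemma index_zpowers_a_le : (zpowers a).index ≤ 12 := by
  rw [index_eq_card, ← Set.ncard_univ, ← vertices_eq_univ]
  exact ncard_vertices_le

lemma card_le_sixty : Nat.card VonDyck235 ≤ 60 := by
  rw [← card_mul_index (zpowers a), Nat.card_zpowers]
  exact Nat.mul_le_mul (orderOf_le_of_pow_eq_one (by norm_num) a_pow_five) index_zpowers_a_le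

instance : Finite VonDyck235 := by
  have : Finite (VonDyck235 ⧸ zpowers a) :=
    Set.finite_univ_iff.1 (vertices_eq_univ ▸ finite_vertices)
  refine Nat.finite_of_card_ne_zero ?_
  rw [← card_mul_index (zpowers a), Nat.card_zpowers]
  refine mul_ne_zero (orderOf_pos_iff.2 ?_).ne' (index_ne_zero_iff_finite.2 this)
  exact isOfFinOrder_iff_pow_eq_one.2 ⟨5, by norm_num, a_pow_five⟩

variable {G : Type*} [Group G] {S T : G}

lemma lift_rels (h5 : S ^ 5 = 1) (h2 : T ^ 2 = 1) (h3 : (S * T) ^ 3 = 1) :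
    ∀ r ∈ rels, FreeGroup.lift (fun x => cond x T S) r = 1 := by
  simp [rels, h5, h2, h3]

def lift (h5 : S ^ 5 = 1) (h2 : T ^ 2 = 1) (h3 : (S * T) ^ 3 = 1) : VonDyck235 →* G :=
  PresentedGroup.toGroup (lift_rels h5 h2 h3)

lemma lift_a (h5 : S ^ 5 = 1) (h2 : T ^ 2 = 1) (h3 : (S * T) ^ 3 = 1) : lift h5 h2 h3 a = S :=
  PresentedGroup.toGroup.of _

lemma range_lift (h5 : S ^ 5 = 1) (h2 : T ^ 2 = 1) (h3 : (S * T) ^ 3 = 1) :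
    (lift h5 h2 h3).range = closure {S, T} := by
  rw [MonoidHom.range_eq_map, ← PresentedGroup.closure_range_of, MonoidHom.map_closure,
    ← Set.range_comp]
  congr 1
  ext x
  simp [lift, PresentedGroup.toGroup.of, eq_comm]

open alternatingGroup in
noncomputable def equivAlternatingGroup : VonDyck235 ≃* alternatingGroup (Fin 5) :=
  let f := lift fiveCycle_pow_five doubleTransposition_sq
    fiveCycle_mul_doubleTransposition_pow_three
  have hsurj : Function.Surjective f := MonoidHom.range_eq_top.1 <| by
    rw [range_lift, closure_fiveCycle_doubleTransposition]
  MulEquiv.ofBijective f <| hsurj.bijective_of_nat_card_le <| by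
    rw [nat_card_alternatingGroup_fin_five]
    exact card_le_sixty

instance : IsSimpleGroup VonDyck235 := equivAlternatingGroup.isSimpleGroup

theorem nonempty_closure_mulEquiv_alternatingGroup (h5 : S ^ 5 = 1) (h2 : T ^ 2 = 1)
    (h3 : (S * T) ^ 3 = 1) (hS : S ≠ 1) :
    Nonempty (closure {S, T} ≃* alternatingGroup (Fin 5)) := by
  have hinj : Function.Injective (lift h5 h2 h3) := by
    rw [← MonoidHom.ker_eq_bot_iff]
    refine (MonoidHom.normal_ker _).eq_bot_or_eq_top.resolve_right fun htop => hS ?_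
    rw [← lift_a h5 h2 h3, ← MonoidHom.mem_ker, htop]
    exact mem_top a
  exact ⟨(MulEquiv.subgroupCongr (range_lift h5 h2 h3)).symm.trans
    ((MonoidHom.ofInjective hinj).symm.trans equivAlternatingGroup)⟩

end VonDyck235

/-- Lemma 6.2(b) of Morton's paper: the subgroup of `PGL₂(ℂ)` generated by the images `S`, `T`
of the matrices `[[ζ,0],[0,1]]` and `[[−(1+√5),2],[2,1+√5]]`, where `ζ = e^{2πi/5}`, is
Fricke's normal form of the icosahedral group: it is isomorphic to the alternating group
`A₅` and in particular has order 60. -/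
theorem fricke_icosahedral_group
    (ζ : ℂ) (hζ : ζ = Complex.exp (2 * Real.pi * Complex.I / 5))
    (MS MT : GL (Fin 2) ℂ)
    (hMS : (MS : Matrix (Fin 2) (Fin 2) ℂ) = !![ζ, 0; 0, 1])
    (hMT : (MT : Matrix (Fin 2) (Fin 2) ℂ) =
      !![-(1 + (Real.sqrt 5 : ℂ)), 2; 2, 1 + (Real.sqrt 5 : ℂ)])
    (S T : PGL2C) (hS : S = QuotientGroup.mk MS) (hT : T = QuotientGroup.mk MT) :
    Nonempty ((Subgroup.closure {S, T} : Subgroup PGL2C) ≃* alternatingGroup (Fin 5)) ∧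
    Nat.card (Subgroup.closure {S, T} : Subgroup PGL2C) = 60 := by
  have hprim : IsPrimitiveRoot ζ 5 := by
    simpa [hζ] using Complex.isPrimitiveRoot_exp 5 (by norm_num)
  have hζ2 : ζ ^ 2 + 1 = (Real.sqrt 5 - 1) / 2 * ζ := hζ ▸ exp_two_pi_I_div_five_sq_add_one
  have hsqrt5 : (Real.sqrt 5 : ℂ) ^ 2 = 5 := by
    exact_mod_cast Real.sq_sqrt (show (0 : ℝ) ≤ 5 by norm_num)
  have hS5 : S ^ 5 = 1 := by
    refine hS ▸ GeneralLinearGroup.mk_pow_eq_one_of_val_pow_eq_smul_one (c := 1) ?_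
    rw [hMS, ← diagonal_vec2, diagonal_pow, one_smul, ← diagonal_one]
    congr 1
    ext i
    fin_cases i <;> simp [hprim.pow_eq_one]
  have hT2 : T ^ 2 = 1 := hT ▸ GeneralLinearGroup.mk_pow_eq_one_of_val_pow_eq_smul_one
    (sq_eq_smul_one_of_trace_eq_zero (by rw [hMT, trace_fin_two_of]; ring))
  have hST3 : (S * T) ^ 3 = 1 := by
    refine hS ▸ hT ▸ GeneralLinearGroup.mk_pow_eq_one_of_val_pow_eq_smul_one (g := MS * MT)
      (pow_three_eq_smul_one_of_trace_sq_eq_det ?_)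
    rw [Units.val_mul, hMS, hMT, mul_fin_two, trace_fin_two_of, det_fin_two_of]
    linear_combination (1 + (Real.sqrt 5 : ℂ)) ^ 2 * hζ2 + ζ * (Real.sqrt 5 - 1) / 2 * hsqrt5
  have hS1 : S ≠ 1 := hS ▸ GeneralLinearGroup.mk_ne_one_of_val_eq_of_ne_one
    (hprim.ne_one (by norm_num)) hMS
  obtain ⟨e⟩ := VonDyck235.nonempty_closure_mulEquiv_alternatingGroup hS5 hT2 hST3 hS1
  exact ⟨⟨e⟩, by rw [Nat.card_congr e.toEquiv, nat_card_alternatingGroup_fin_five]⟩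
end

section
/- Let l be a prime with l ≡ 1 or 4 (mod 5), and let a ∈ 𝔽_l satisfy a ≠ 0 and that a² − 44a − 16 is not a square in 𝔽_l. Then there exist e, u, v, u′, v′ ∈ 𝔽_l with e² + e = 1, u = e⁵·(v−1), u′ = e⁵·(v′−1), such that x⁴ + a·x³ + (11a+2)·x² − a·x + 1 = (x² + u·x + v)·(x² + u′·x + v′) in 𝔽_l[x], and both quadratic factors x²+ux+v and x²+u′x+v′ are irreducible over 𝔽_l. -/
open Polynomial

/-!
For a root `e` of `e² + e = 1` put `E = e⁵`, so that `E² + 11E = 1`. Comparing coefficients,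
`gₐ = (x² + E(v - 1)x + v)(x² + E(v⁻¹ - 1)x + v⁻¹)` as soon as `v ≠ 0` solves
`E(v - 1)² = av`, a quadratic in `v` of discriminant `a(a + 4E)`. The other root `-1 - e` gives
`(a + 4e⁵)(a + 4(-1 - e)⁵) = a² - 44a - 16`, so if `a(a + 4E)` were a nonsquare for both roots,
their product `a²(a² - 44a - 16)` would be a square. The two factors are irreducible because
`gₐ` has no root at all: `gₐ(x) = x² h(x - 1/x)` with `h(y) = y² + ay + 11a + 4`, whose
discriminant is `a² - 44a - 16`.
-/

/-- The quartic `gₐ` of the paper. -/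
noncomputable def quartic {R : Type*} [CommRing R] (a : R) : R[X] :=
  X ^ 4 + C a * X ^ 3 + C (11 * a + 2) * X ^ 2 - C a * X + 1

section CommRing

variable {R : Type*} [CommRing R]

theorem neg_one_sub_pow_five {e : R} (he : e ^ 2 + e = 1) : (-1 - e) ^ 5 = -11 - e ^ 5 := by
  linear_combination (-10 - 5 * e - 5 * e ^ 2) * he

theorem quartic_eq_mul {E a v w : R} (hE : E ^ 2 + 11 * E = 1) (hvw : v * w = 1)
    (hv : E * (v - 1) ^ 2 = a * v) :
    quartic a = (X ^ 2 + C (E * (v - 1)) * X + C v) * (X ^ 2 + C (E * (w - 1)) * X + C w) := by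
  have hX3 : E * (v - 1) + E * (w - 1) = a := by
    linear_combination w * hv + (a + 2 * E - E * v) * hvw
  have hX2 : v + w + E * (v - 1) * (E * (w - 1)) = 11 * a + 2 := by
    linear_combination E ^ 2 * hvw + (2 - v - w) * hE + 11 * hX3
  have hX1 : E * (v - 1) * w + E * (w - 1) * v = -a := by linear_combination 2 * E * hvw - hX3
  rw [quartic]
  linear_combination (norm := skip) -X ^ 3 * congrArg C hX3 - X ^ 2 * congrArg C hX2
    - X * congrArg C hX1 - congrArg C hvw
  simp only [map_add, map_sub, map_mul, map_neg, map_one, map_ofNat]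
  ring

theorem four_mul_eval_quartic (a x : R) :
    4 * (quartic a).eval x = (2 * x ^ 2 + a * x - 2) ^ 2 - x ^ 2 * (a ^ 2 - 44 * a - 16) := by
  simp only [quartic, eval_add, eval_sub, eval_mul, eval_pow, eval_C, eval_X, eval_one]
  ring

end CommRing

section Field

variable {K : Type*} [Field K]

theorem not_isRoot_quartic {a : K} (h : ¬IsSquare (a ^ 2 - 44 * a - 16)) (x : K) :
    ¬(quartic a).IsRoot x := by
  intro hx
  have hx0 : x ≠ 0 := by
    rintro rfl
    simp [quartic] at hx
  have hsq := four_mul_eval_quartic a x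
  rw [hx.eq_zero, mul_zero] at hsq
  exact h ⟨(2 * x ^ 2 + a * x - 2) / x, by field_simp; linear_combination hsq⟩

theorem irreducible_of_dvd_quartic {a u v : K} (h : ¬IsSquare (a ^ 2 - 44 * a - 16))
    (hq : X ^ 2 + C u * X + C v ∣ quartic a) : Irreducible (X ^ 2 + C u * X + C v) := by
  refine irreducible_of_degree_le_three_of_not_isRoot ?_ fun x hx ↦
    not_isRoot_quartic h x (hx.dvd hq)
  have hdeg : (X ^ 2 + C u * X + C v).natDegree = 2 := by compute_degree!
  rw [hdeg]
  decide

variable [NeZero (2 : K)]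

theorem exists_sq_add_self_eq_one (h5 : IsSquare (5 : K)) : ∃ e : K, e ^ 2 + e = 1 := by
  obtain ⟨c, hc⟩ := h5
  obtain ⟨e, he⟩ := exists_quadratic_eq_zero (a := (1 : K)) (b := 1) (c := -1) one_ne_zero
    ⟨c, by rw [discrim]; linear_combination hc⟩
  exact ⟨e, by linear_combination he⟩

theorem exists_mul_sub_one_sq_eq_mul {E a : K} (hE : E ≠ 0) (h : IsSquare (a * (a + 4 * E))) :
    ∃ v, v ≠ 0 ∧ E * (v - 1) ^ 2 = a * v := by
  obtain ⟨t, ht⟩ := h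
  obtain ⟨v, hv⟩ := exists_quadratic_eq_zero (a := E) (b := -(2 * E + a)) (c := E) hE
    ⟨t, by rw [discrim]; linear_combination ht⟩
  refine ⟨v, ?_, by linear_combination hv⟩
  rintro rfl
  exact hE (by simpa using hv)

end Field

theorem FiniteField.isSquare_mul_of_not_isSquare {F : Type*} [Field F] [Fintype F] {x y : F}
    (hx : ¬IsSquare x) (hy : ¬IsSquare y) : IsSquare (x * y) := by
  classical
  have hx0 : x ≠ 0 := by rintro rfl; exact hx IsSquare.zero
  have hy0 : y ≠ 0 := by rintro rfl; exact hy IsSquare.zero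
  rw [← quadraticChar_one_iff_isSquare (mul_ne_zero hx0 hy0), map_mul,
    quadraticChar_neg_one_iff_not_isSquare.mpr hx,
    quadraticChar_neg_one_iff_not_isSquare.mpr hy]
  norm_num

theorem FiniteField.exists_isSquare_mul_add_four_mul_pow_five {F : Type*} [Field F] [Fintype F]
    {a e : F} (he : e ^ 2 + e = 1) (h : ¬IsSquare (a ^ 2 - 44 * a - 16)) :
    ∃ e' : F, e' ^ 2 + e' = 1 ∧ IsSquare (a * (a + 4 * e' ^ 5)) := by
  by_contra! hne
  have h₁ := hne e he
  have h₂ := hne (-1 - e) (by linear_combination he)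
  have hprod :
      a * (a + 4 * e ^ 5) * (a * (a + 4 * (-1 - e) ^ 5)) = a ^ 2 * (a ^ 2 - 44 * a - 16) := by
    rw [neg_one_sub_pow_five he]
    linear_combination -16 * a ^ 2 * pow_five_sq_add_eleven_mul_pow_five he
  have hsq := isSquare_mul_of_not_isSquare h₁ h₂
  rw [hprod] at hsq
  have ha : a ≠ 0 := by rintro rfl; exact h₁ (by simp)
  exact h (by simpa [ha] using hsq.div (IsSquare.sq a))

theorem ZMod.isSquare_five {l : ℕ} [Fact l.Prime] (hl : l % 5 = 1 ∨ l % 5 = 4) :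
    IsSquare (5 : ZMod l) := by
  have hl2 : l ≠ 2 := by rintro rfl; omega
  have : Fact (Nat.Prime 5) := ⟨by norm_num⟩
  have hl5 : IsSquare (l : ZMod 5) := by
    rw [← ZMod.natCast_mod]
    rcases hl with h | h <;> rw [h]
    exacts [⟨1, rfl⟩, ⟨2, rfl⟩]
  exact_mod_cast (ZMod.exists_sq_eq_prime_iff_of_mod_four_eq_one (p := 5) (by norm_num) hl2).mp hl5

theorem quartic_splits_into_two_irreducible_quadratics_general
    (l : ℕ) (hl : Nat.Prime l) (hmod5 : l % 5 = 1 ∨ l % 5 = 4)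
    (a : ZMod l)
    (hns : ¬ IsSquare (a ^ 2 - 44 * a - 16)) :
    ∃ e u v u' v' : ZMod l,
      e ^ 2 + e = 1 ∧
      u = e ^ 5 * (v - 1) ∧
      u' = e ^ 5 * (v' - 1) ∧
      (X ^ 4 + C a * X ^ 3 + C (11 * a + 2) * X ^ 2 - C a * X + 1 : Polynomial (ZMod l)) =
        (X ^ 2 + C u * X + C v) * (X ^ 2 + C u' * X + C v') ∧
      Irreducible (X ^ 2 + C u * X + C v : Polynomial (ZMod l)) ∧
      Irreducible (X ^ 2 + C u' * X + C v' : Polynomial (ZMod l)) := by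
  have : Fact l.Prime := ⟨hl⟩
  have hl2 : l ≠ 2 := by rintro rfl; omega
  have : NeZero (2 : ZMod l) := ⟨Ring.two_ne_zero (by rwa [ZMod.ringChar_zmod_n])⟩
  obtain ⟨e₀, he₀⟩ := exists_sq_add_self_eq_one (ZMod.isSquare_five hmod5)
  obtain ⟨e, he, hsq⟩ := FiniteField.exists_isSquare_mul_add_four_mul_pow_five he₀ hns
  have hE := pow_five_sq_add_eleven_mul_pow_five he
  obtain ⟨v, hv0, hv⟩ := exists_mul_sub_one_sq_eq_mul (fun h ↦ by simp [h] at hE) hsq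
  have hfac := quartic_eq_mul hE (mul_inv_cancel₀ hv0) hv
  exact ⟨e, _, v, _, v⁻¹, he, rfl, rfl, hfac,
    irreducible_of_dvd_quartic hns (Dvd.intro _ hfac.symm),
    irreducible_of_dvd_quartic hns (Dvd.intro_left _ hfac.symm)⟩

/-- Proposition 4.2 of Morton's paper (general form): for a prime `l ≡ ±1 (mod 5)` and
`a ∈ 𝔽_l` with `a ≠ 0` and `a² − 44a − 16` a nonsquare in `𝔽_l`, the quartic
`x⁴ + ax³ + (11a+2)x² − ax + 1` splits over `𝔽_l` into two irreducible quadratics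
`x² + ux + v`, `x² + u′x + v′` with `u = e⁵(v−1)` and `u′ = e⁵(v′−1)` for a root `e`
of `e² + e = 1`. -/
theorem quartic_splits_into_two_irreducible_quadratics
    (l : ℕ) (hl : Nat.Prime l) (hmod5 : l % 5 = 1 ∨ l % 5 = 4)
    (a : ZMod l) (ha : a ≠ 0)
    (hns : ¬ IsSquare (a ^ 2 - 44 * a - 16)) :
    ∃ e u v u' v' : ZMod l,
      e ^ 2 + e = 1 ∧
      u = e ^ 5 * (v - 1) ∧
      u' = e ^ 5 * (v' - 1) ∧
      (X ^ 4 + C a * X ^ 3 + C (11 * a + 2) * X ^ 2 - C a * X + 1 : Polynomial (ZMod l)) =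
        (X ^ 2 + C u * X + C v) * (X ^ 2 + C u' * X + C v') ∧
      Irreducible (X ^ 2 + C u * X + C v : Polynomial (ZMod l)) ∧
      Irreducible (X ^ 2 + C u' * X + C v' : Polynomial (ZMod l)) :=
  quartic_splits_into_two_irreducible_quadratics_general l hl hmod5 a hns
end
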